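/- For η ∼ N(0,1), v̂ > 0, the smoothed denoiser h ↦ E_η[g(h + √v̂·η, Q̂)] admits the closed form E_η[g(h+√v̂ η,Q̂)] = (1/(Q̂+λ(1−γ))) · [ (h−λγ)·Φ((h−λγ)/√v̂) + (h+λγ)·Φ(−(h+λγ)/√v̂) + √v̂·φ((h−λγ)/√v̂) − √v̂·φ((h+λγ)/√v̂) ], where Φ and φ are the standard normal CDF and PDF. -/

import Mathlib

open Real MeasureTheory ProbabilityTheory Set
open scoped ENNReal NNReal

/-- Elastic net denoising function. -/
noncomputable def elasticNetDenoiser (lam gam Q h : ℝ) : ℝ :=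
  if |h| ≤ lam * gam then 0
  else (h - Real.sign h * (lam * gam)) / (Q + lam * (1 - gam))

/-- Standard normal density. -/
noncomputable def stdNormalPDF (s : ℝ) : ℝ := Real.exp (-s^2 / 2) / Real.sqrt (2 * Real.pi)

/-- Standard normal CDF. -/
noncomputable def stdNormalCDF (t : ℝ) : ℝ := ∫ s in Set.Iic t, stdNormalPDF s

lemma stdNormalPDF_eq (s : ℝ) : stdNormalPDF s = Real.exp (-(1/2) * s^2) * (Real.sqrt (2*Real.pi))⁻¹ := by
  rw [stdNormalPDF, div_eq_mul_inv]; ring_nf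

lemma stdNormalPDF_neg (s : ℝ) : stdNormalPDF (-s) = stdNormalPDF s := by
  simp [stdNormalPDF, neg_sq]

lemma integrable_stdNormalPDF : Integrable stdNormalPDF := by
  have : Integrable (fun s : ℝ => Real.exp (-(1/2) * s^2) * (Real.sqrt (2*Real.pi))⁻¹) :=
    (integrable_exp_neg_mul_sq (by norm_num)).mul_const _
  exact this.congr (Filter.Eventually.of_forall fun s => (stdNormalPDF_eq s).symm)

lemma integrable_id_mul_stdNormalPDF : Integrable (fun x => x * stdNormalPDF x) := by
  have : Integrable (fun x : ℝ => (x * Real.exp (-(1/2) * x^2)) * (Real.sqrt (2*Real.pi))⁻¹) :=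
    (integrable_mul_exp_neg_mul_sq (by norm_num)).mul_const _
  exact this.congr (Filter.Eventually.of_forall fun s => by simp only [stdNormalPDF_eq]; ring)

lemma stdNormalPDF_nonneg (s : ℝ) : 0 ≤ stdNormalPDF s := by
  unfold stdNormalPDF; positivity

lemma measurable_stdNormalPDF : Measurable stdNormalPDF := by
  unfold stdNormalPDF; fun_prop

lemma stdNormalCDF_neg_eq (t : ℝ) : stdNormalCDF (-t) = ∫ x in Ioi t, stdNormalPDF x := by
  have h := integral_comp_neg_Iic (-t) stdNormalPDF
  simp only [neg_neg] at h
  rw [stdNormalCDF, ← h]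
  exact setIntegral_congr_fun measurableSet_Iic fun x _ => (stdNormalPDF_neg x).symm

lemma hasDerivAt_neg_stdNormalPDF (x : ℝ) :
    HasDerivAt (fun y => -stdNormalPDF y) (x * stdNormalPDF x) x := by
  have h1 : HasDerivAt (fun y : ℝ => -y^2/2) (-x) x := by
    have := ((hasDerivAt_pow 2 x).neg).div_const 2
    refine this.congr_deriv ?_
    norm_num; ring
  have h2 := ((h1.exp).div_const (Real.sqrt (2*Real.pi))).neg
  refine h2.congr_deriv ?_
  rw [stdNormalPDF]
  field_simp

lemma tendsto_neg_stdNormalPDF_atTop :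
    Filter.Tendsto (fun y => -stdNormalPDF y) Filter.atTop (nhds 0) := by
  rw [show (0:ℝ) = -(0 / Real.sqrt (2*Real.pi)) by simp]
  refine Filter.Tendsto.neg (Filter.Tendsto.div_const ?_ _)
  refine Real.tendsto_exp_atBot.comp ?_
  have h : Filter.Tendsto (fun y:ℝ => y^2/2) Filter.atTop Filter.atTop :=
    (Filter.tendsto_pow_atTop (by norm_num)).atTop_div_const (by norm_num)
  rw [← Filter.tendsto_neg_atTop_iff]
  refine h.congr fun y => by ring

lemma tendsto_neg_stdNormalPDF_atBot :
    Filter.Tendsto (fun y => -stdNormalPDF y) Filter.atBot (nhds 0) := by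
  have h := tendsto_neg_stdNormalPDF_atTop.comp Filter.tendsto_neg_atBot_atTop
  refine h.congr fun y => by simp [stdNormalPDF_neg]

lemma integral_id_mul_stdNormalPDF_Ioi (t : ℝ) :
    ∫ x in Ioi t, x * stdNormalPDF x = stdNormalPDF t := by
  have := integral_Ioi_of_hasDerivAt_of_tendsto' (f := fun y => -stdNormalPDF y)
    (f' := fun x => x * stdNormalPDF x) (a := t)
    (fun x _ => hasDerivAt_neg_stdNormalPDF x)
    (integrable_id_mul_stdNormalPDF.integrableOn)
    tendsto_neg_stdNormalPDF_atTop
  simpa using this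

lemma integral_id_mul_stdNormalPDF_Iic (u : ℝ) :
    ∫ x in Iic u, x * stdNormalPDF x = -stdNormalPDF u := by
  have h := integral_comp_neg_Iic u (fun x => x * stdNormalPDF x)
  have h2 : ∫ x in Iic u, -(x * stdNormalPDF x) = ∫ x in Ioi (-u), x * stdNormalPDF x := by
    rw [← h]
    exact setIntegral_congr_fun measurableSet_Iic fun x _ => by simp [stdNormalPDF_neg]
  rw [integral_id_mul_stdNormalPDF_Ioi, integral_neg] at h2
  rw [stdNormalPDF_neg] at h2
  linarith

lemma gaussianPDFReal_std (x : ℝ) : gaussianPDFReal 0 1 x = stdNormalPDF x := by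
  simp only [gaussianPDFReal, stdNormalPDF, NNReal.coe_one, mul_one, sub_zero, div_eq_mul_inv]
  ring

lemma integral_gaussianReal_std (f : ℝ → ℝ) :
    ∫ x, f x ∂(gaussianReal 0 1) = ∫ x, f x * stdNormalPDF x := by
  rw [gaussianReal_of_var_ne_zero 0 one_ne_zero,
    show gaussianPDF 0 1 = fun x => ((gaussianPDFReal 0 1 x).toNNReal : ℝ≥0∞) from rfl,
    integral_withDensity_eq_integral_smul ((measurable_gaussianPDFReal 0 1).real_toNNReal) f]
  refine integral_congr_ae (Filter.Eventually.of_forall fun x => ?_)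
  simp only [NNReal.smul_def, gaussianPDFReal_std, Real.coe_toNNReal _ (stdNormalPDF_nonneg x),
    smul_eq_mul]
  ring


/-- Closed form of the Gaussian-smoothed elastic net denoiser. -/
theorem elasticNetDenoiser_gaussian_closed_form
    (lam gam Q v h : ℝ) (hlam : 0 < lam) (hgam : gam ∈ Set.Icc (0:ℝ) 1)
    (hQ : 0 < Q) (hv : 0 < v) :
    ∫ η, elasticNetDenoiser lam gam Q (h + Real.sqrt v * η) ∂(gaussianReal 0 1) =
      (1 / (Q + lam * (1 - gam))) *
        ((h - lam * gam) * stdNormalCDF ((h - lam * gam) / Real.sqrt v)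
          + (h + lam * gam) * stdNormalCDF (-(h + lam * gam) / Real.sqrt v)
          + Real.sqrt v * stdNormalPDF ((h - lam * gam) / Real.sqrt v)
          - Real.sqrt v * stdNormalPDF ((h + lam * gam) / Real.sqrt v)) := by
  obtain ⟨hg0, hg1⟩ := hgam
  set s := Real.sqrt v with hs_def
  have hs : 0 < s := Real.sqrt_pos.mpr hv
  set a := lam * gam with ha_def
  have ha : 0 ≤ a := mul_nonneg hlam.le hg0
  set c := Q + lam * (1 - gam) with hc_def
  have hc : 0 < c := by
    have : 0 ≤ lam * (1 - gam) := mul_nonneg hlam.le (by linarith)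
    linarith
  set t := (a - h) / s with ht_def
  set u := (-a - h) / s with hu_def
  have hut : u ≤ t := by
    rw [ht_def, hu_def]
    exact (div_le_div_iff_of_pos_right hs).mpr (by linarith)
  -- pointwise decomposition
  have hpt : ∀ x : ℝ, elasticNetDenoiser lam gam Q (h + s * x) =
      (Ioi t).indicator (fun x => (h + s * x - a) / c) x
        + (Iic u).indicator (fun x => (h + s * x + a) / c) x := by
    intro x
    unfold elasticNetDenoiser
    rw [← ha_def, ← hc_def]
    by_cases hle : |h + s * x| ≤ a
    · rw [if_pos hle]
      rw [abs_le] at hle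
      have hx1 : x ∉ Ioi t := by
        simp only [mem_Ioi, not_lt, ht_def, le_div_iff₀ hs]
        linarith [hle.2]
      rw [indicator_of_notMem hx1, zero_add]
      by_cases hxu : x ∈ Iic u
      · have hb : h + s * x = -a := by
          have h2 := hxu
          simp only [mem_Iic, hu_def, le_div_iff₀ hs] at h2
          have := hle.1
          linarith
        rw [indicator_of_mem hxu]
        simp [hb]
      · rw [indicator_of_notMem hxu]
    · rw [if_neg hle]
      rw [not_le, lt_abs] at hle
      rcases hle with hpos | hneg
      · have hy0 : 0 < h + s * x := lt_of_le_of_lt ha hpos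
        have hxt : x ∈ Ioi t := by
          simp only [mem_Ioi, ht_def, div_lt_iff₀ hs]
          linarith
        have hxu : x ∉ Iic u := by
          simp only [mem_Iic, not_le]
          have : u < x := lt_of_le_of_lt hut hxt
          exact this
        rw [indicator_of_mem hxt, indicator_of_notMem hxu, Real.sign_of_pos hy0]
        ring
      · have hy0 : h + s * x < 0 := by linarith
        have hxu : x ∈ Iic u := by
          simp only [mem_Iic, hu_def, le_div_iff₀ hs]
          linarith
        have hxt : x ∉ Ioi t := by
          simp only [mem_Ioi, not_lt]
          exact le_trans hxu hut
        rw [indicator_of_notMem hxt, indicator_of_mem hxu, Real.sign_of_neg hy0, zero_add]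
        ring
  -- integrability
  have hInt1 : Integrable (fun x => (h + s * x - a) / c * stdNormalPDF x) := by
    have he : (fun x => (h + s * x - a) / c * stdNormalPDF x)
        = fun x => ((h - a)/c) * stdNormalPDF x + (s/c) * (x * stdNormalPDF x) :=
      funext fun x => by ring
    rw [he]
    exact (integrable_stdNormalPDF.const_mul _).add (integrable_id_mul_stdNormalPDF.const_mul _)
  have hInt2 : Integrable (fun x => (h + s * x + a) / c * stdNormalPDF x) := by
    have he : (fun x => (h + s * x + a) / c * stdNormalPDF x)
        = fun x => ((h + a)/c) * stdNormalPDF x + (s/c) * (x * stdNormalPDF x) :=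
      funext fun x => by ring
    rw [he]
    exact (integrable_stdNormalPDF.const_mul _).add (integrable_id_mul_stdNormalPDF.const_mul _)
  rw [integral_gaussianReal_std]
  have step1 : ∫ x, elasticNetDenoiser lam gam Q (h + s * x) * stdNormalPDF x
      = ∫ x, ((Ioi t).indicator (fun x => (h + s * x - a) / c * stdNormalPDF x) x
          + (Iic u).indicator (fun x => (h + s * x + a) / c * stdNormalPDF x) x) := by
    refine integral_congr_ae (Filter.Eventually.of_forall fun x => ?_)
    simp only [hpt, Set.indicator_apply]
    split_ifs <;> ring
  rw [step1, integral_add (hInt1.indicator measurableSet_Ioi) (hInt2.indicator measurableSet_Iic),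
    integral_indicator measurableSet_Ioi, integral_indicator measurableSet_Iic]
  have e1 : ∫ x in Ioi t, (h + s * x - a) / c * stdNormalPDF x
      = (h - a)/c * (∫ x in Ioi t, stdNormalPDF x) + s/c * (∫ x in Ioi t, x * stdNormalPDF x) := by
    rw [← integral_const_mul, ← integral_const_mul,
      ← integral_add ((integrable_stdNormalPDF.const_mul _).integrableOn)
        ((integrable_id_mul_stdNormalPDF.const_mul _).integrableOn)]
    exact setIntegral_congr_fun measurableSet_Ioi fun x _ => by ring
  have e2 : ∫ x in Iic u, (h + s * x + a) / c * stdNormalPDF x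
      = (h + a)/c * (∫ x in Iic u, stdNormalPDF x) + s/c * (∫ x in Iic u, x * stdNormalPDF x) := by
    rw [← integral_const_mul, ← integral_const_mul,
      ← integral_add ((integrable_stdNormalPDF.const_mul _).integrableOn)
        ((integrable_id_mul_stdNormalPDF.const_mul _).integrableOn)]
    exact setIntegral_congr_fun measurableSet_Iic fun x _ => by ring
  rw [e1, e2, ← stdNormalCDF_neg_eq t, integral_id_mul_stdNormalPDF_Ioi,
    integral_id_mul_stdNormalPDF_Iic, show (∫ x in Iic u, stdNormalPDF x) = stdNormalCDF u from rfl]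
  have ht1 : -t = (h - a) / s := by rw [ht_def]; ring
  have hu1 : u = -(h + a) / s := by rw [hu_def]; ring
  have hphi_t : stdNormalPDF t = stdNormalPDF ((h - a) / s) := by
    rw [← ht1, stdNormalPDF_neg]
  have hphi_u : stdNormalPDF u = stdNormalPDF ((h + a) / s) := by
    rw [hu1, show -(h + a) / s = -((h + a) / s) by ring, stdNormalPDF_neg]
  rw [ht1, hphi_t, hphi_u, hu1]
  field_simp
  ring
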